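/- arXiv:1410.3439 — 2 statements merged into one kernel-verified Lean document; each statement's English description precedes it below -/
import Mathlib

section
/- Let p ≡ 3 mod 4 (e.g. p = 3) and let τ = τ_p be conjugation by [[0,1],[p,0]] on SL₂(ℚ_p). Then the element q = diag(1/p, p) lies in the extended symmetric space {g : τ(g)=g⁻¹} but is not of the form g τ(g)⁻¹ for any g ∈ SL₂(ℚ_p). Hence the symmetric space is strictly contained in the extended symmetric space. -/
/-! The matrix identities reduce `q = g τ(g)⁻¹` with `g = !![a, b; c, d]` of determinant one to
`(p b)² + 1 = p a²`. Over `ℚ_p` with `p ≡ 3 mod 4` this has no solution: comparing the parities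
of valuations forces `a, b ∈ ℤ_p`, and then reduction mod `p` makes `-1` a square in `𝔽_p`. -/

open Matrix

noncomputable def tau {k : Type*} [Field k] (m : k) (g : Matrix (Fin 2) (Fin 2) k) :
    Matrix (Fin 2) (Fin 2) k := !![0,1;m,0] * g * (!![0,1;m,0])⁻¹

section Tau

variable {k : Type*} [Field k] {m : k}

theorem tau_of (hm : m ≠ 0) (a b c d : k) :
    tau m !![a, b; c, d] = !![d, c / m; m * b, a] := by
  have hinv : (!![0, 1; m, 0])⁻¹ = !![0, m⁻¹; 1, 0] :=
    inv_eq_left_inv (by simp [one_fin_two, hm])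
  rw [tau, hinv]
  simp [div_eq_mul_inv, mul_comm m, hm]

theorem det_tau (hm : m ≠ 0) (g : Matrix (Fin 2) (Fin 2) k) : (tau m g).det = g.det :=
  det_conj (isUnit_iff_isUnit_det _ |>.2 (by simp [hm])) g

theorem mul_tau_eq_of_eq_mul_inv_tau (hm : m ≠ 0) {g q : Matrix (Fin 2) (Fin 2) k}
    (hg : IsUnit g.det) (h : q = g * (tau m g)⁻¹) : q * tau m g = g := by
  rw [h, mul_assoc, nonsing_inv_mul _ (by rwa [det_tau hm]), mul_one]

theorem exists_sq_add_one_eq_mul_sq_of_eq_mul_inv_tau (hm : m ≠ 0)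
    (g : Matrix (Fin 2) (Fin 2) k) (hg : g.det = 1) (h : !![m⁻¹, 0; 0, m] = g * (tau m g)⁻¹) :
    ∃ x y : k, x ^ 2 + 1 = m * y ^ 2 := by
  obtain ⟨a, b, c, d, rfl⟩ : ∃ a b c d, g = !![a, b; c, d] := ⟨_, _, _, _, eta_fin_two g⟩
  have h' := mul_tau_eq_of_eq_mul_inv_tau hm (by simp [hg]) h
  rw [tau_of hm, mul_fin_two] at h'
  have hc : m * (m * b) = c := by simpa using congr_fun₂ h' 1 0
  have hd : m * a = d := by simpa using congr_fun₂ h' 1 1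
  subst hc hd
  rw [det_fin_two_of] at hg
  exact ⟨m * b, a, by linear_combination -hg⟩

end Tau

theorem PadicInt.isSquare_neg_one_of_sq_add_one_eq_mul_sq {p : ℕ} [Fact p.Prime] {x y : ℤ_[p]}
    (h : x ^ 2 + 1 = p * y ^ 2) : IsSquare (-1 : ZMod p) := by
  have h' := congrArg toZMod h
  simp only [map_add, map_pow, map_one, map_mul, map_natCast, CharP.cast_eq_zero, zero_mul] at h'
  exact ⟨toZMod x, by linear_combination -h'⟩

namespace Padic

variable {p : ℕ} [Fact p.Prime]

theorem natCast_p_ne_zero : (p : ℚ_[p]) ≠ 0 :=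
  Nat.cast_ne_zero.2 (Fact.out : p.Prime).ne_zero

theorem norm_sq_ne_norm_p_mul_sq {x : ℚ_[p]} (hx : x ≠ 0) (y : ℚ_[p]) :
    ‖x ^ 2‖ ≠ ‖(p : ℚ_[p]) * y ^ 2‖ := by
  intro h
  have hy : y ≠ 0 := by rintro rfl; simp [hx] at h
  have hp1 : (1 : ℝ) < p := by exact_mod_cast (Fact.out : p.Prime).one_lt
  rw [norm_eq_zpow_neg_valuation (pow_ne_zero 2 hx),
    norm_eq_zpow_neg_valuation (mul_ne_zero natCast_p_ne_zero (pow_ne_zero 2 hy)),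
    (zpow_right_strictMono₀ hp1).injective.eq_iff,
    valuation_mul natCast_p_ne_zero (pow_ne_zero 2 hy), valuation_pow, valuation_pow,
    valuation_p] at h
  omega

theorem norm_le_one_of_sq_add_one_eq_mul_sq_left {x y : ℚ_[p]} (h : x ^ 2 + 1 = p * y ^ 2) :
    ‖x‖ ≤ 1 := by
  by_contra! hx
  have hx0 : x ≠ 0 := norm_pos_iff.1 (one_pos.trans hx)
  have hlt : ‖(1 : ℚ_[p])‖ < ‖x ^ 2‖ := by rw [norm_one, norm_pow]; nlinarith
  have hsum : ‖x ^ 2 + 1‖ = ‖x ^ 2‖ := by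
    rw [add_eq_max_of_ne hlt.ne', max_eq_left hlt.le]
  exact norm_sq_ne_norm_p_mul_sq hx0 y (by rw [← hsum, h])

theorem norm_le_one_of_sq_add_one_eq_mul_sq_right {x y : ℚ_[p]} (h : x ^ 2 + 1 = p * y ^ 2) :
    ‖y‖ ≤ 1 := by
  rcases eq_or_ne y 0 with rfl | hy
  · simp
  have hx := norm_le_one_of_sq_add_one_eq_mul_sq_left h
  have hrhs : ‖(p : ℚ_[p]) * y ^ 2‖ ≤ 1 :=
    h ▸ (nonarchimedean _ _).trans
      (max_le (by rw [norm_pow]; nlinarith [norm_nonneg x]) norm_one.le)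
  rw [norm_le_one_iff_val_nonneg, valuation_mul natCast_p_ne_zero (pow_ne_zero 2 hy),
    valuation_p, valuation_pow] at hrhs
  rw [norm_le_one_iff_val_nonneg]
  omega

theorem sq_add_one_ne_mul_sq (hp : p % 4 = 3) (x y : ℚ_[p]) :
    x ^ 2 + 1 ≠ p * y ^ 2 := by
  intro h
  let X : ℤ_[p] := ⟨x, norm_le_one_of_sq_add_one_eq_mul_sq_left h⟩
  let Y : ℤ_[p] := ⟨y, norm_le_one_of_sq_add_one_eq_mul_sq_right h⟩
  have hXY : X ^ 2 + 1 = p * Y ^ 2 := PadicInt.ext (by push_cast; exact h)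
  exact ZMod.exists_sq_eq_neg_one_iff.1 (PadicInt.isSquare_neg_one_of_sq_add_one_eq_mul_sq hXY) hp

end Padic

/-- For p ≡ 3 mod 4 and τ = τ_p on SL₂(ℚ_p), the element q = diag(1/p, p) lies in the
extended symmetric space but not in the symmetric space; hence the symmetric space is
strictly contained in the extended symmetric space. -/
theorem stmt10 (p : ℕ) [Fact p.Prime] (hp : p % 4 = 3) :
    (!![((p : ℚ_[p]))⁻¹, 0; 0, (p : ℚ_[p])]).det = 1 ∧
    tau (p : ℚ_[p]) !![((p : ℚ_[p]))⁻¹, 0; 0, (p : ℚ_[p])] =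
      (!![((p : ℚ_[p]))⁻¹, 0; 0, (p : ℚ_[p])])⁻¹ ∧
    ¬ ∃ g : Matrix (Fin 2) (Fin 2) ℚ_[p], g.det = 1 ∧
        !![((p : ℚ_[p]))⁻¹, 0; 0, (p : ℚ_[p])] = g * (tau (p : ℚ_[p]) g)⁻¹ := by
  have hp0 : (p : ℚ_[p]) ≠ 0 := Padic.natCast_p_ne_zero
  refine ⟨by simp, ?_, ?_⟩
  · rw [tau_of hp0]
    exact (inv_eq_left_inv (by simp [one_fin_two])).symm
  · rintro ⟨g, hg, hq⟩
    obtain ⟨x, y, hxy⟩ := exists_sq_add_one_eq_mul_sq_of_eq_mul_inv_tau hp0 g hg hq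
    exact Padic.sq_add_one_ne_mul_sq hp x y hxy
end

section
/- Let k be a field of characteristic 2 and let τ₀ be conjugation by N = [[1,1],[0,1]] on SL₂(k). Then the fixed-point group of τ₀ is {[[a,b],[0,a]] : a² = 1, b ∈ k}, which is a unipotent subgroup, and the extended symmetric space is {[[x,y],[z,x+z]] : x² + xz + yz = 1}. -/
/-! Conjugation by `N` sends `[[a,b],[c,d]]` to `[[a+c, b+d-a-c],[c, d-c]]`. Comparing entries,
`τ₀ g = g` means `c = 0, d = a`; in characteristic 2 the inverse of a determinant-one matrix
is its adjugate `[[d,b],[c,a]]`, and `τ₀ g = g⁻¹` reduces to `d = a + c`. The fixed points are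
unipotent because `(a - 1)² = a² - 1` in characteristic 2, so `a² = 1` forces `a = 1`. -/

open Matrix

noncomputable def tau0 {k : Type*} [Field k] (g : Matrix (Fin 2) (Fin 2) k) :
    Matrix (Fin 2) (Fin 2) k := !![1,1;0,1] * g * (!![1,1;0,1])⁻¹

theorem eq_one_of_sq_eq_one_of_two_eq_zero {R : Type*} [CommRing R] [NoZeroDivisors R]
    (h2 : (2 : R) = 0) {a : R} (ha : a ^ 2 = 1) : a = 1 := by
  have : (a - 1) ^ 2 = 0 := by linear_combination ha + (1 - a) * h2
  exact sub_eq_zero.mp (pow_eq_zero_iff two_ne_zero |>.mp this)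

theorem Matrix.inv_fin_two_of_det_eq_one {R : Type*} [CommRing R] {a b c d : R}
    (h : a * d - b * c = 1) : (!![a, b; c, d])⁻¹ = !![d, -b; -c, a] := by
  rw [inv_def, adjugate_fin_two_of, det_fin_two_of, h]
  simp

theorem Matrix.exists_eq_fin_two {α : Type*} (g : Matrix (Fin 2) (Fin 2) α) :
    ∃ a b c d, g = !![a, b; c, d] :=
  ⟨_, _, _, _, g.eta_fin_two⟩

namespace tau0

variable {k : Type*} [Field k]

theorem of_fin_two (a b c d : k) :
    tau0 !![a, b; c, d] = !![a + c, b + d - a - c; c, d - c] := by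
  have hN : (!![1, 1; 0, 1] : Matrix (Fin 2) (Fin 2) k)⁻¹ = !![1, -1; 0, 1] :=
    inv_eq_right_inv (by simp [one_fin_two])
  rw [tau0, hN, mul_fin_two, mul_fin_two]
  ext i j
  fin_cases i <;> fin_cases j <;> simp <;> ring

theorem eq_self_iff (a b c d : k) :
    tau0 !![a, b; c, d] = !![a, b; c, d] ↔ c = 0 ∧ d = a := by
  simp only [of_fin_two, EmbeddingLike.apply_eq_iff_eq, vecCons_inj, and_true]
  constructor
  · rintro ⟨⟨hc, hd⟩, -⟩
    exact ⟨by linear_combination hc, by linear_combination hd + hc⟩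
  · rintro ⟨rfl, rfl⟩
    simp

theorem eq_inv_iff (h2 : (2 : k) = 0) {a b c d : k} (hdet : a * d - b * c = 1) :
    tau0 !![a, b; c, d] = !![a, b; c, d]⁻¹ ↔ d = a + c := by
  simp only [of_fin_two, inv_fin_two_of_det_eq_one hdet, EmbeddingLike.apply_eq_iff_eq,
    vecCons_inj, and_true]
  constructor
  · rintro ⟨⟨hd, -⟩, -⟩
    exact hd.symm
  · rintro rfl
    exact ⟨⟨rfl, by linear_combination b * h2⟩, by linear_combination c * h2, by ring⟩

theorem det_eq_one_and_eq_self_iff (g : Matrix (Fin 2) (Fin 2) k) :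
    g.det = 1 ∧ tau0 g = g ↔ ∃ a b : k, a ^ 2 = 1 ∧ g = !![a, b; 0, a] := by
  obtain ⟨a, b, c, d, rfl⟩ := g.exists_eq_fin_two
  rw [eq_self_iff, det_fin_two_of]
  constructor
  · rintro ⟨hdet, rfl, rfl⟩
    exact ⟨_, b, by linear_combination hdet, rfl⟩
  · rintro ⟨x, y, hx, h⟩
    simp only [EmbeddingLike.apply_eq_iff_eq, vecCons_inj, and_true] at h
    obtain ⟨⟨rfl, rfl⟩, rfl, rfl⟩ := h
    exact ⟨by linear_combination hx, rfl, rfl⟩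

theorem sub_one_sq_eq_zero (h2 : (2 : k) = 0) {g : Matrix (Fin 2) (Fin 2) k}
    (hg : g.det = 1 ∧ tau0 g = g) : (g - 1) ^ 2 = 0 := by
  obtain ⟨a, b, ha, rfl⟩ := (det_eq_one_and_eq_self_iff g).1 hg
  obtain rfl := eq_one_of_sq_eq_one_of_two_eq_zero h2 ha
  simp [sq, one_fin_two]

theorem det_eq_one_and_eq_inv_iff (h2 : (2 : k) = 0) (g : Matrix (Fin 2) (Fin 2) k) :
    g.det = 1 ∧ tau0 g = g⁻¹ ↔
      ∃ x y z : k, x ^ 2 + x * z + y * z = 1 ∧ g = !![x, y; z, x + z] := by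
  obtain ⟨a, b, c, d, rfl⟩ := g.exists_eq_fin_two
  rw [det_fin_two_of]
  constructor
  · rintro ⟨hdet, h⟩
    obtain rfl := (eq_inv_iff h2 hdet).1 h
    exact ⟨a, b, c, by linear_combination hdet + b * c * h2, rfl⟩
  · rintro ⟨x, y, z, hxyz, h⟩
    simp only [EmbeddingLike.apply_eq_iff_eq, vecCons_inj, and_true] at h
    obtain ⟨⟨rfl, rfl⟩, rfl, rfl⟩ := h
    have hdet : a * (a + c) - b * c = 1 := by linear_combination hxyz - b * c * h2
    exact ⟨hdet, (eq_inv_iff h2 hdet).2 rfl⟩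

end tau0

/-- In characteristic 2, for τ₀ = Inn([[1,1],[0,1]]) on SL₂(k): the fixed-point group is
{[[a,b],[0,a]] : a² = 1}, which is unipotent, and the extended symmetric space is
{[[x,y],[z,x+z]] : x² + xz + yz = 1}. -/
theorem stmt19 {k : Type*} [Field k] (hchar : (2 : k) = 0) :
    ({g : Matrix (Fin 2) (Fin 2) k | g.det = 1 ∧ tau0 g = g} =
        {g : Matrix (Fin 2) (Fin 2) k | ∃ a b : k, a ^ 2 = 1 ∧ g = !![a, b; 0, a]}) ∧
    (∀ g : Matrix (Fin 2) (Fin 2) k, (g.det = 1 ∧ tau0 g = g) → (g - 1) ^ 2 = 0) ∧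
    ({g : Matrix (Fin 2) (Fin 2) k | g.det = 1 ∧ tau0 g = g⁻¹} =
        {g : Matrix (Fin 2) (Fin 2) k |
          ∃ x y z : k, x ^ 2 + x * z + y * z = 1 ∧ g = !![x, y; z, x + z]}) :=
  ⟨Set.ext tau0.det_eq_one_and_eq_self_iff, fun _ => tau0.sub_one_sq_eq_zero hchar,
    Set.ext (tau0.det_eq_one_and_eq_inv_iff hchar)⟩
end
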